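/- The staged tree of a DAG represents the same model: for any DAG G on {1, …, p} all of whose edges (j, i) satisfy j < i, a probability mass function P on 𝕏 belongs to the Bayesian network model M_G if and only if P belongs to the staged tree model M_{κ^G} of the induced staging; that is, M_G = M_{κ^G}. -/
import Mathlib


open scoped Classical

/-- Full configurations of the `p` variables `X 0, …, X (p-1)`. -/
abbrev Cfg {p : ℕ} (X : Fin p → Type) : Type := ∀ j : Fin p, X j

/-- Prefixes of length `i`: assignments of values to the first `i` variables. -/
abbrev Pref {p : ℕ} (X : Fin p → Type) (i : ℕ) : Type :=
  ∀ j : Fin p, (j : ℕ) < i → X j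

/-- The full configuration `y` extends the prefix `x`. -/
def Agrees {p : ℕ} {X : Fin p → Type} {i : ℕ} (y : Cfg X) (x : Pref X i) : Prop :=
  ∀ (j : Fin p) (h : (j : ℕ) < i), y j = x j h

/-- The probability (under the mass function `P`) that the first `i` variables take the
values prescribed by the prefix `x`. -/
noncomputable def prefProb {p : ℕ} {X : Fin p → Type} [∀ j, Fintype (X j)]
    (P : Cfg X → ℝ) {i : ℕ} (x : Pref X i) : ℝ :=
  ∑ y : Cfg X, if Agrees y x then P y else 0

/-- The conditional probability `P(X_{i+1} = z | (X_1, …, X_i) = x)` (with `i` zero-based: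
the variable indexed by `i : Fin p` given the values `x` of the preceding variables). -/
noncomputable def condProb {p : ℕ} {X : Fin p → Type} [∀ j, Fintype (X j)]
    (P : Cfg X → ℝ) (i : Fin p) (x : Pref X i.1) (z : X i) : ℝ :=
  (∑ y : Cfg X, if Agrees y x ∧ y i = z then P y else 0) / prefProb P x

/-- Membership in the staged tree model `M_κ` of the staging `κ`: `P` is a strictly positive
probability mass function whose conditional distributions coincide on vertices in the
same stage, at every level `i ∈ {1, …, p-1}` (zero-based: `1 ≤ i < p`). -/
def MemStagedModel {p : ℕ} {X : Fin p → Type} [∀ j, Fintype (X j)] {C : Type*}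
    (κ : (i : Fin p) → Pref X i.1 → C) (P : Cfg X → ℝ) : Prop :=
  (∀ y : Cfg X, 0 < P y) ∧ (∑ y : Cfg X, P y = 1) ∧
    ∀ i : Fin p, 1 ≤ (i : ℕ) → ∀ x x' : Pref X i.1, κ i x = κ i x' →
      ∀ z : X i, condProb P i x z = condProb P i x' z

/-- Membership in the Bayesian network model `M_G` of a DAG on `{1, …, p}` whose edges all
point from lower to higher indices; the DAG is encoded by its edge relation `E`
(`E j i` means there is an edge from `j` to `i`, i.e. `j` is a parent of `i`). -/
def MemBNModel {p : ℕ} {X : Fin p → Type} [∀ j, Fintype (X j)]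
    (E : Fin p → Fin p → Prop) (P : Cfg X → ℝ) : Prop :=
  (∀ y : Cfg X, 0 ≤ P y) ∧ (∑ y : Cfg X, P y = 1) ∧
    ∃ g : (i : Fin p) → X i → ((j : Fin p) → E j i → X j) → ℝ,
      (∀ (i : Fin p) (z : X i) (par : (j : Fin p) → E j i → X j),
        g i z par ∈ Set.Ioo (0 : ℝ) 1) ∧
      (∀ (i : Fin p) (par : (j : Fin p) → E j i → X j), ∑ z : X i, g i z par = 1) ∧
      (∀ y : Cfg X, P y = ∏ i : Fin p, g i (y i) (fun j _ => y j))

/-- The edge relation of the DAG `G_κ` associated to a staging `κ`: there is an edge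
from `k` to `i` iff `k < i` and there are two prefixes of length `i` differing only in
coordinate `k` that receive different colors. -/
def stagingEdge {p : ℕ} {X : Fin p → Type} {C : Type*}
    (κ : (i : Fin p) → Pref X i.1 → C) (k i : Fin p) : Prop :=
  (k : ℕ) < (i : ℕ) ∧ ∃ x x' : Pref X i.1,
    (∀ (j : Fin p) (h : (j : ℕ) < (i : ℕ)), j ≠ k → x j h = x' j h) ∧ κ i x ≠ κ i x'

/-- The staging `κ^G` induced by a DAG with edge relation `E` (all of whose edges point
from lower to higher indices): the color of a prefix of length `i` is its projection onto
the parent coordinates of vertex `i`. -/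
def indStaging {p : ℕ} {X : Fin p → Type} (E : Fin p → Fin p → Prop)
    (hE : ∀ k i : Fin p, E k i → (k : ℕ) < (i : ℕ)) :
    (i : Fin p) → Pref X i.1 → ((i : Fin p) × ((j : Fin p) → E j i → X j)) :=
  fun i x => ⟨i, fun j h => x j (hE j i h)⟩

set_option linter.unusedSectionVars false
set_option linter.unusedVariables false

section Helpers

variable {p : ℕ} {X : Fin p → Type} [∀ j, Fintype (X j)]

noncomputable def numer (P : Cfg X → ℝ) (i : Fin p) (x : Pref X i.1) (z : X i) : ℝ :=
  ∑ y : Cfg X, if Agrees y x ∧ y i = z then P y else 0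

theorem condProb_eq (P : Cfg X → ℝ) (i : Fin p) (x : Pref X i.1) (z : X i) :
    condProb P i x z = numer P i x z / prefProb P x := rfl

def extPref (i : Fin p) (x : Pref X i.1) (z : X i) : Pref X (i.1 + 1) :=
  fun j h => if h' : (j : ℕ) < i.1 then x j h' else
    cast (congrArg X (Fin.ext (by omega) : i = j)) z

theorem extPref_lt (i : Fin p) (x : Pref X i.1) (z : X i) (j : Fin p)
    (h : (j:ℕ) < i.1 + 1) (h' : (j:ℕ) < i.1) : extPref i x z j h = x j h' := dif_pos h'

theorem extPref_self (i : Fin p) (x : Pref X i.1) (z : X i) (h : (i:ℕ) < i.1+1) :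
    extPref i x z i h = z := by
  simp only [extPref, dif_neg (lt_irrefl (i:ℕ))]
  exact cast_eq_iff_heq.mpr HEq.rfl

theorem agrees_extPref (i : Fin p) (x : Pref X i.1) (z : X i) (y : Cfg X) :
    Agrees y (extPref i x z) ↔ Agrees y x ∧ y i = z := by
  constructor
  · intro h
    refine ⟨fun j hj => ?_, ?_⟩
    · rw [h j (by omega), extPref_lt]
    · rw [h i (by omega), extPref_self]
  · rintro ⟨h1, h2⟩ j hj
    by_cases h' : (j:ℕ) < i.1
    · rw [h1 j h', extPref_lt]
    · have hji : j = i := Fin.ext (by omega)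
      subst hji
      rw [h2, extPref_self]

theorem numer_eq_prefProb_ext (P : Cfg X → ℝ) (i : Fin p) (x : Pref X i.1) (z : X i) :
    numer P i x z = prefProb P (extPref i x z) := by
  unfold numer prefProb
  apply Finset.sum_congr rfl
  intro y _
  simp only [agrees_extPref]

theorem prefProb_eq_sum_numer (P : Cfg X → ℝ) (i : Fin p) (x : Pref X i.1) :
    prefProb P x = ∑ z : X i, numer P i x z := by
  unfold prefProb numer
  rw [Finset.sum_comm]
  apply Finset.sum_congr rfl
  intro y _
  by_cases hA : Agrees y x
  · simp [hA]
  · simp [hA]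

theorem prefProb_pos (P : Cfg X → ℝ) (hpos : ∀ y, 0 < P y) (hne : ∀ j, Nonempty (X j))
    {n : ℕ} (x : Pref X n) : 0 < prefProb P x := by
  have inh : ∀ j, Inhabited (X j) := fun j => Classical.inhabited_of_nonempty (hne j)
  unfold prefProb
  apply Finset.sum_pos'
  · intro y _
    by_cases h : Agrees y x <;> simp [h, le_of_lt (hpos y)]
  · refine ⟨fun j => if h : (j:ℕ) < n then x j h else (inh j).default,
      Finset.mem_univ _, ?_⟩
    have hA : Agrees (fun j => if h : (j:ℕ) < n then x j h else (inh j).default) x :=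
      fun j hj => dif_pos hj
    simpa [hA] using hpos _

theorem prefProb_zero (P : Cfg X → ℝ) (hsum : ∑ y : Cfg X, P y = 1) (x : Pref X 0) :
    prefProb P x = 1 := by
  unfold prefProb
  rw [← hsum]
  apply Finset.sum_congr rfl
  intro y _
  have : Agrees y x := fun j hj => absurd hj (Nat.not_lt_zero _)
  simp [this]

theorem prefProb_full (P : Cfg X → ℝ) (x : Pref X p) :
    prefProb P x = P (fun j => x j j.isLt) := by
  unfold prefProb
  rw [Finset.sum_eq_single (fun j => x j j.isLt)]
  · have : Agrees (fun j => x j j.isLt) x := fun j h => rfl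
    simp [this]
  · intro y _ hy
    have : ¬ Agrees y x := fun hA => hy (funext fun j => hA j j.isLt)
    simp [this]
  · intro h; exact absurd (Finset.mem_univ _) h

end Helpers

section Helpers2

variable {p : ℕ} {X : Fin p → Type} [∀ j, Fintype (X j)]

theorem sum_condProb (P : Cfg X → ℝ) (hpos : ∀ y, 0 < P y) (hne : ∀ j, Nonempty (X j))
    (i : Fin p) (x : Pref X i.1) : ∑ z : X i, condProb P i x z = 1 := by
  have hden := prefProb_pos P hpos hne x
  simp only [condProb_eq]
  rw [← Finset.sum_div, ← prefProb_eq_sum_numer, div_self (ne_of_gt hden)]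

theorem condProb_mem_Ioo (P : Cfg X → ℝ) (hpos : ∀ y, 0 < P y) (hne : ∀ j, Nonempty (X j))
    (i : Fin p) (h2 : 2 ≤ Fintype.card (X i)) (x : Pref X i.1) (z : X i) :
    condProb P i x z ∈ Set.Ioo (0:ℝ) 1 := by
  have hden := prefProb_pos P hpos hne x
  have hnum : ∀ z' : X i, 0 < numer P i x z' := fun z' => by
    rw [numer_eq_prefProb_ext]; exact prefProb_pos P hpos hne _
  obtain ⟨z', hz'⟩ := Fintype.exists_ne_of_one_lt_card (by omega) z
  have hlt : numer P i x z < prefProb P x := by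
    rw [prefProb_eq_sum_numer P i x]
    exact Finset.single_lt_sum hz' (Finset.mem_univ z) (Finset.mem_univ z') (hnum z')
      (fun k _ _ => le_of_lt (hnum k))
  rw [condProb_eq]
  exact ⟨div_pos (hnum z) hden, (div_lt_one hden).mpr hlt⟩

def truncP (y : Cfg X) (n : ℕ) : Pref X n := fun j _ => y j

theorem prefProb_trunc_succ (P : Cfg X → ℝ) (y : Cfg X) {n : ℕ} (hn : n < p) :
    prefProb P (truncP y (n+1)) = numer P ⟨n, hn⟩ (truncP y n) (y ⟨n, hn⟩) := by
  unfold prefProb numer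
  apply Finset.sum_congr rfl
  intro y' _
  have hiff : Agrees y' (truncP y (n+1)) ↔ Agrees y' (truncP y n) ∧ y' ⟨n,hn⟩ = y ⟨n,hn⟩ := by
    constructor
    · intro h; exact ⟨fun j hj => h j (by omega), h ⟨n,hn⟩ (by simp)⟩
    · rintro ⟨h1, h2⟩ j hj
      by_cases h' : (j:ℕ) < n
      · exact h1 j h'
      · have hj' : j = ⟨n, hn⟩ := Fin.ext (by simpa using by omega)
        subst hj'; exact h2
  simp only [hiff]

theorem telescope (P : Cfg X → ℝ) (hpos : ∀ y, 0 < P y) (hne : ∀ j, Nonempty (X j))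
    (hsum : ∑ y : Cfg X, P y = 1) (y : Cfg X) :
    ∀ n (hn : n ≤ p), prefProb P (truncP y n)
      = ∏ i : Fin n, condProb P (Fin.castLE hn i) (truncP y i.1) (y (Fin.castLE hn i)) := by
  intro n
  induction n with
  | zero => intro hn; simp [prefProb_zero P hsum]
  | succ n ih =>
    intro hn
    have hn' : n ≤ p := by omega
    have hnp : n < p := hn
    rw [Fin.prod_univ_castSucc, prefProb_trunc_succ P y hnp]
    have h1 : (∏ i : Fin n, condProb P (Fin.castLE hn (Fin.castSucc i))
        (truncP y ((Fin.castSucc i) : ℕ)) (y (Fin.castLE hn (Fin.castSucc i))))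
        = prefProb P (truncP y n) := (ih hn').symm
    rw [h1]
    have hden := prefProb_pos P hpos hne (truncP y n)
    have h2 : condProb P (Fin.castLE hn (Fin.last n)) (truncP y ((Fin.last n) : ℕ))
        (y (Fin.castLE hn (Fin.last n)))
        = numer P ⟨n, hnp⟩ (truncP y n) (y ⟨n, hnp⟩) / prefProb P (truncP y n) :=
      condProb_eq P ⟨n, hnp⟩ (truncP y n) (y ⟨n, hnp⟩)
    rw [h2, mul_div_cancel₀ _ (ne_of_gt hden)]

theorem chain_rule (P : Cfg X → ℝ) (hpos : ∀ y, 0 < P y) (hne : ∀ j, Nonempty (X j))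
    (hsum : ∑ y : Cfg X, P y = 1) (y : Cfg X) :
    P y = ∏ i : Fin p, condProb P i (truncP y i.1) (y i) := by
  have := telescope P hpos hne hsum y p le_rfl
  rw [prefProb_full] at this
  have hy : (fun j => truncP y p j j.isLt) = y := rfl
  rw [hy] at this
  rw [this]
  apply Finset.prod_congr rfl
  intro i _
  rfl

end Helpers2

section BN

noncomputable def BNP {p : ℕ} {X : Fin p → Type} [∀ j, Fintype (X j)]
    {E : Fin p → Fin p → Prop}
    (g : (i : Fin p) → X i → ((j : Fin p) → E j i → X j) → ℝ) : Cfg X → ℝ :=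
  fun y => ∏ i : Fin p, g i (y i) (fun j _ => y j)

variable {p : ℕ} {X : Fin p → Type} [∀ j, Fintype (X j)]
  {E : Fin p → Fin p → Prop} (hE : ∀ k i : Fin p, E k i → (k : ℕ) < (i : ℕ))
  (g : (i : Fin p) → X i → ((j : Fin p) → E j i → X j) → ℝ)

theorem prod_ext_split (i : Fin p) (x : Pref X i.1) (z : X i) :
    (∏ j : Fin p, if h : (j:ℕ) < i.1 + 1 then
        g j (extPref i x z j h) (fun k hk => extPref i x z k (lt_trans (hE k j hk) h)) else 1)
    = g i z (fun k hk => x k (hE k i hk)) *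
      ∏ j : Fin p, if h : (j:ℕ) < i.1 then
        g j (x j h) (fun k hk => x k (lt_trans (hE k j hk) h)) else 1 := by
  rw [Fintype.prod_eq_mul_prod_compl i (fun j => if h : (j:ℕ) < i.1 + 1 then
        g j (extPref i x z j h) (fun k hk => extPref i x z k (lt_trans (hE k j hk) h)) else 1),
      Fintype.prod_eq_mul_prod_compl i (fun j => if h : (j:ℕ) < i.1 then
        g j (x j h) (fun k hk => x k (lt_trans (hE k j hk) h)) else 1)]
  have hFi : (if h : (i:ℕ) < i.1 + 1 then
      g i (extPref i x z i h) (fun k hk => extPref i x z k (lt_trans (hE k i hk) h)) else 1)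
      = g i z (fun k hk => x k (hE k i hk)) := by
    rw [dif_pos (by omega : (i:ℕ) < i.1 + 1)]
    congr 1
    · exact extPref_self i x z _
    · funext k hk
      exact extPref_lt i x z k _ (hE k i hk)
  have hGi : (if h : (i:ℕ) < i.1 then
      g i (x i h) (fun k hk => x k (lt_trans (hE k i hk) h)) else 1) = 1 :=
    dif_neg (lt_irrefl _)
  rw [hFi, hGi, one_mul]
  congr 1
  apply Finset.prod_congr rfl
  intro j hj
  have hj' : j ≠ i := by simpa using hj
  by_cases h' : (j:ℕ) < i.1
  · rw [dif_pos (by omega : (j:ℕ) < i.1 + 1), dif_pos h']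
    congr 1
    · exact extPref_lt i x z j _ h'
    · funext k hk
      exact extPref_lt i x z k _ (lt_trans (hE k j hk) h')
  · have h'' : ¬ (j:ℕ) < i.1 + 1 := by
      intro hc
      exact hj' (Fin.ext (by omega))
    rw [dif_neg h'', dif_neg h']

theorem bn_prefProb (hg1 : ∀ (i : Fin p) par, ∑ z : X i, g i z par = 1) :
    ∀ m n, n + m = p → ∀ x : Pref X n,
      prefProb (BNP g) x = ∏ j : Fin p, if h : (j:ℕ) < n then
        g j (x j h) (fun k hk => x k (lt_trans (hE k j hk) h)) else 1 := by
  intro m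
  induction m with
  | zero =>
    intro n hmn x
    have hnp : n = p := by omega
    subst hnp
    rw [prefProb_full]
    unfold BNP
    refine Finset.prod_congr rfl fun j _ => ?_
    rw [dif_pos j.isLt]
  | succ m ih =>
    intro n hmn x
    have hnp : n < p := by omega
    rw [prefProb_eq_sum_numer (BNP g) ⟨n, hnp⟩ x]
    have hsummand : ∀ z : X (⟨n, hnp⟩ : Fin p), numer (BNP g) ⟨n, hnp⟩ x z
        = g ⟨n, hnp⟩ z (fun k hk => x k (hE k ⟨n, hnp⟩ hk)) *
          ∏ j : Fin p, if h : (j:ℕ) < n then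
            g j (x j h) (fun k hk => x k (lt_trans (hE k j hk) h)) else 1 := by
      intro z
      rw [numer_eq_prefProb_ext, ih (n+1) (by omega) (extPref ⟨n, hnp⟩ x z),
        prod_ext_split hE g ⟨n, hnp⟩ x z]
    rw [Finset.sum_congr rfl (fun z _ => hsummand z), ← Finset.sum_mul, hg1, one_mul]


theorem bn_condProb (hg0 : ∀ (i : Fin p) (z : X i) par, g i z par ∈ Set.Ioo (0:ℝ) 1)
    (hg1 : ∀ (i : Fin p) par, ∑ z : X i, g i z par = 1)
    (i : Fin p) (x : Pref X i.1) (z : X i) :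
    condProb (BNP g) i x z = g i z (fun k hk => x k (hE k i hk)) := by
  have hD : 0 < ∏ j : Fin p, (if h : (j:ℕ) < i.1 then
      g j (x j h) (fun k hk => x k (lt_trans (hE k j hk) h)) else 1) := by
    apply Finset.prod_pos
    intro j _
    by_cases h : (j:ℕ) < i.1
    · rw [dif_pos h]; exact (hg0 _ _ _).1
    · rw [dif_neg h]; exact one_pos
  have hi := i.isLt
  rw [condProb_eq, numer_eq_prefProb_ext,
    bn_prefProb hE g hg1 (p - (i.1+1)) (i.1+1) (by omega) (extPref i x z),
    bn_prefProb hE g hg1 (p - i.1) i.1 (by omega) x,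
    prod_ext_split hE g i x z, mul_div_assoc, div_self (ne_of_gt hD), mul_one]

end BN

/-- The staged tree of a DAG represents the same model: for any DAG `G` on
`{1, …, p}` all of whose edges point from lower to higher indices, a probability mass
function `P` belongs to the Bayesian network model `M_G` if and only if it belongs to the
staged tree model of the induced staging `κ^G`; that is, `M_G = M_{κ^G}`. -/
theorem bnModel_eq_stagedModel_indStaging {p : ℕ} (hp : 1 ≤ p) (X : Fin p → Type)
    [∀ j, Fintype (X j)] (h2 : ∀ j, 2 ≤ Fintype.card (X j))
    (E : Fin p → Fin p → Prop) (hE : ∀ k i : Fin p, E k i → (k : ℕ) < (i : ℕ)) :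
    ∀ P : Cfg X → ℝ, MemBNModel E P ↔ MemStagedModel (indStaging (X := X) E hE) P := by
  intro P
  have hne : ∀ j, Nonempty (X j) := fun j =>
    Fintype.card_pos_iff.mp (by have := h2 j; omega)
  constructor
  · rintro ⟨h0, hsum, g, hg0, hg1, hfac⟩
    have hPeq : P = BNP g := funext fun y => hfac y
    have hpos : ∀ y, 0 < P y := fun y => by
      rw [hfac y]; exact Finset.prod_pos fun j _ => (hg0 j (y j) _).1
    refine ⟨hpos, hsum, ?_⟩
    intro i hi x x' hcolor z
    simp only [indStaging] at hcolor
    obtain ⟨-, hsnd⟩ := Sigma.mk.inj_iff.mp hcolor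
    have hxx' : (fun k hk => x k (hE k i hk)) = (fun k hk => x' k (hE k i hk)) :=
      eq_of_heq hsnd
    rw [hPeq, bn_condProb hE g hg0 hg1 i x z, bn_condProb hE g hg0 hg1 i x' z, hxx']
  · rintro ⟨hpos, hsum, hstage⟩
    refine ⟨fun y => le_of_lt (hpos y), hsum, ?_⟩
    have inh : ∀ j, Inhabited (X j) := fun j => Classical.inhabited_of_nonempty (hne j)
    refine ⟨fun i z par =>
      condProb P i (fun j _ => if hj : E j i then par j hj else (inh j).default) z,
      ?_, ?_, ?_⟩
    · intro i z par
      exact condProb_mem_Ioo P hpos hne i (h2 i) _ z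
    · intro i par
      exact sum_condProb P hpos hne i _
    · intro y
      rw [chain_rule P hpos hne hsum y]
      refine Finset.prod_congr rfl fun i _ => ?_
      rcases Nat.eq_zero_or_pos i.1 with h0 | h1
      · have hx : (truncP y i.1 : Pref X i.1)
            = (fun j _ => if hj : E j i then (fun k _ => y k) j hj else (inh j).default) :=
          funext fun j => funext fun hj => absurd hj (by omega)
        rw [hx]
      · apply hstage i h1
        show indStaging E hE i (truncP y i.1) = _
        unfold indStaging
        exact congrArg (Sigma.mk i)
          (funext fun j => funext fun h =>
            show y j = if hj : E j i then y j else (inh j).default from by rw [dif_pos h])
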